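/- Let a ≥ 0 and b > 0, and let f : [0,∞) → ℝ be continuous with |f(x)| ≤ M_f·(1+x²) for all x ≥ 0 and some constant M_f > 0. Then for every x ∈ [0,b] and every n ∈ ℕ, |K_n^a(f;x) − f(x)| ≤ 4M_f·(1+b²)·u_{n,2}^a(x) + 2·ω_{b+1}(f, √(u_{n,2}^a(x))), where ω_{b+1}(f,δ) = sup_{|t−x|≤δ, x,t∈[0,b+1]} |f(t) − f(x)| is the modulus of continuity of f on [0,b+1] and u_{n,2}^a(x) = K_n^a((t−x)²;x). -/

import Mathlib

open MeasureTheory Filter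

noncomputable section

/-- Rising factorial `(n)_i = n(n+1)⋯(n+i-1)`, with `(n)_0 = 1`. -/
def risingFac (n : ℕ) : ℕ → ℝ
  | 0 => 1
  | i + 1 => risingFac n i * ((n : ℝ) + i)

/-- `P_k(n,a) = Σ_{i=0}^{k} C(k,i) (n)_i a^(k-i)`. -/
def Pba (k n : ℕ) (a : ℝ) : ℝ :=
  ∑ i ∈ Finset.range (k + 1), (k.choose i : ℝ) * risingFac n i * a ^ (k - i)

/-- Generalized Baskakov basis function `W_{n,k}^a(x)`. -/
def Wgb (a : ℝ) (n k : ℕ) (x : ℝ) : ℝ :=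
  Real.exp (-(a * x) / (1 + x)) * (Pba k n a / (Nat.factorial k : ℝ)) * x ^ k /
    (1 + x) ^ (n + k)

/-- Generalized Baskakov–Kantorovich operator `K_n^a(f;x)`. -/
def Kgb (a : ℝ) (n : ℕ) (f : ℝ → ℝ) (x : ℝ) : ℝ :=
  ((n : ℝ) + 1) * ∑' k : ℕ,
    Wgb a n k x * ∫ t in ((k : ℝ) / ((n : ℝ) + 1))..(((k : ℝ) + 1) / ((n : ℝ) + 1)), f t


/-- Modulus of continuity of `f` on the finite interval `[0,b]`:
`ω_b(f,δ) = sup_{x,t∈[0,b], |t−x|≤δ} |f(t) − f(x)|`. -/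
def modContOn (f : ℝ → ℝ) (b δ : ℝ) : ℝ :=
  sSup {y | ∃ s t : ℝ, s ∈ Set.Icc (0 : ℝ) b ∧ t ∈ Set.Icc (0 : ℝ) b ∧ |t - s| ≤ δ ∧
    y = |f t - f s|}

/-!
For `x ≥ 0` the weights `W_{n,k}^a(x)` are nonnegative and sum to `1`, because
`∑ₖ P_k(n,a) uᵏ / k! = e^{au} (1 - u)⁻ⁿ` (a Cauchy product of the binomial and exponential series)
evaluated at `u = x / (1 + x)`; the same series at a slightly larger `u` makes the second moments
summable. Hence `K_n^a(·; x)` is a positive linear functional with `K_n^a(1; x) = 1` on continuous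
functions of quadratic growth. For `x ∈ [0, b]` and `t ≥ 0` one has
`|f t - f x| ≤ 4 M_f (1 + b²) (t - x)² + (1 + (t - x)² / δ²) ω_{b+1}(f, δ)`: for `t ≤ b + 1` by
splitting `[x, t]` into `⌈|t - x| / δ⌉` steps of length `≤ δ`, for `t > b + 1` (so `|t - x| ≥ 1`)
from the growth bound alone. Applying `K_n^a(·; x)` and taking `δ² = u_{n,2}^a(x) > 0` gives the
estimate.
-/

open Set
open scoped Nat

lemma risingFac_eq_ascFactorial (n i : ℕ) : risingFac n i = n.ascFactorial i := by
  induction i with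
  | zero => simp [risingFac]
  | succ i ih => rw [risingFac, ih, Nat.ascFactorial_succ]; push_cast; ring

lemma risingFac_nonneg (n i : ℕ) : 0 ≤ risingFac n i := by
  rw [risingFac_eq_ascFactorial]; positivity

lemma hasSum_risingFac_div_factorial_mul_pow (n : ℕ) {u : ℝ} (hu : |u| < 1) :
    HasSum (fun i => risingFac n i / i ! * u ^ i) (1 / (1 - u) ^ n) := by
  rcases n with _ | m
  · convert hasSum_single (f := fun i => risingFac 0 i / i ! * u ^ i) 0 fun i hi => ?_ using 1
    · simp [risingFac]
    · obtain ⟨j, rfl⟩ := Nat.exists_eq_succ_of_ne_zero hi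
      simp [risingFac_eq_ascFactorial, Nat.zero_ascFactorial]
  · refine (hasSum_choose_mul_geometric_of_norm_lt_one m (r := u) hu).congr_fun fun i => ?_
    rw [risingFac_eq_ascFactorial, Nat.ascFactorial_eq_factorial_mul_choose, add_comm i m,
      Nat.choose_symm_add]
    push_cast
    field_simp

lemma Pba_nonneg {a : ℝ} (ha : 0 ≤ a) (k n : ℕ) : 0 ≤ Pba k n a :=
  Finset.sum_nonneg fun i _ => by have := risingFac_nonneg n i; positivity

lemma Pba_zero (n : ℕ) (a : ℝ) : Pba 0 n a = 1 := by
  simp [Pba, risingFac]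

lemma hasSum_Pba_div_factorial_mul_pow (n : ℕ) (a : ℝ) {u : ℝ} (hu : |u| < 1) :
    HasSum (fun k => Pba k n a / k ! * u ^ k) (Real.exp (a * u) / (1 - u) ^ n) := by
  have hrise := hasSum_risingFac_div_factorial_mul_pow n hu
  have hexp : HasSum (fun j => (a * u) ^ j / j !) (Real.exp (a * u)) := by
    rw [Real.exp_eq_exp_ℝ]; exact NormedSpace.expSeries_div_hasSum_exp (a * u)
  have hrise_norm : Summable fun i => ‖risingFac n i / i ! * u ^ i‖ := by
    refine (hasSum_risingFac_div_factorial_mul_pow n (u := |u|) (by rwa [abs_abs])).summable.congr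
      fun i => ?_
    have := risingFac_nonneg n i
    rw [Real.norm_eq_abs, abs_mul, abs_pow,
      abs_of_nonneg (a := risingFac n i / i !) (by positivity)]
  have hexp_norm : Summable fun j => ‖(a * u) ^ j / (j ! : ℝ)‖ :=
    summable_norm_iff.mpr hexp.summable
  have h := hasSum_sum_range_mul_of_summable_norm hrise_norm hexp_norm
  rw [hrise.tsum_eq, hexp.tsum_eq, one_div_mul_eq_div] at h
  refine h.congr_fun fun k => ?_
  rw [Pba, Finset.sum_div, Finset.sum_mul]
  refine Finset.sum_congr rfl fun i hi => ?_
  have hik : i ≤ k := Nat.lt_succ_iff.mp (Finset.mem_range.mp hi)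
  rw [Nat.cast_choose ℝ hik, mul_pow, ← pow_mul_pow_sub u hik]
  field_simp

lemma Wgb_eq_mul {a x : ℝ} (hx : 0 ≤ x) (n k : ℕ) :
    Wgb a n k x = Real.exp (-(a * x) / (1 + x)) / (1 + x) ^ n *
      (Pba k n a / k ! * (x / (1 + x)) ^ k) := by
  rw [Wgb, div_pow, pow_add]
  field_simp

lemma abs_div_one_add_lt_one {x : ℝ} (hx : 0 ≤ x) : |x / (1 + x)| < 1 := by
  rw [abs_of_nonneg (by positivity), div_lt_one (by positivity)]; linarith

lemma Wgb_nonneg {a x : ℝ} (ha : 0 ≤ a) (hx : 0 ≤ x) (n k : ℕ) : 0 ≤ Wgb a n k x := by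
  have := Pba_nonneg ha k n
  rw [Wgb_eq_mul hx]; positivity

lemma Wgb_zero_pos (a : ℝ) {x : ℝ} (hx : 0 ≤ x) (n : ℕ) : 0 < Wgb a n 0 x := by
  rw [Wgb_eq_mul hx, Pba_zero]; positivity

lemma hasSum_Wgb (a : ℝ) {x : ℝ} (hx : 0 ≤ x) (n : ℕ) : HasSum (fun k => Wgb a n k x) 1 := by
  have h := (hasSum_Pba_div_factorial_mul_pow n a (abs_div_one_add_lt_one hx)).mul_left
    (Real.exp (-(a * x) / (1 + x)) / (1 + x) ^ n)
  have hval : Real.exp (-(a * x) / (1 + x)) / (1 + x) ^ n *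
      (Real.exp (a * (x / (1 + x))) / (1 - x / (1 + x)) ^ n) = 1 := by
    rw [show 1 - x / (1 + x) = (1 + x)⁻¹ by field_simp; ring, inv_pow, div_inv_eq_mul]
    field_simp
    rw [← Real.exp_add]
    ring_nf
    simp
  rw [hval] at h
  exact h.congr_fun (Wgb_eq_mul hx n)

lemma summable_mul_pow_mul_natCast_pow {c : ℕ → ℝ} {u v : ℝ} (huv : |u| < v)
    (hc : Summable fun k => c k * v ^ k) (p : ℕ) :
    Summable fun k => c k * u ^ k * (k : ℝ) ^ p := by
  have hv : 0 < v := (abs_nonneg u).trans_lt huv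
  have hr : ‖u / v‖ < 1 := by
    rwa [Real.norm_eq_abs, abs_div, abs_of_pos hv, div_lt_one hv]
  have hc0 := hc.tendsto_atTop_zero
  rw [tendsto_zero_iff_norm_tendsto_zero] at hc0
  refine (summable_pow_mul_geometric_of_norm_lt_one p hr).norm.of_norm_bounded_eventually_nat ?_
  filter_upwards [hc0.eventually (eventually_le_nhds one_pos)] with k hk
  have hsplit : c k * u ^ k * (k : ℝ) ^ p = (c k * v ^ k) * ((k : ℝ) ^ p * (u / v) ^ k) := by
    rw [div_pow]; field_simp
  rw [hsplit, norm_mul]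
  exact mul_le_of_le_one_left (norm_nonneg _) hk

lemma summable_Wgb_mul_sq (a : ℝ) {x : ℝ} (hx : 0 ≤ x) (n : ℕ) :
    Summable fun k => Wgb a n k x * (k : ℝ) ^ 2 := by
  set u := x / (1 + x)
  have hu : |u| < 1 := abs_div_one_add_lt_one hx
  have huv : |u| < (1 + |u|) / 2 := by linarith
  have hv : |(1 + |u|) / 2| < 1 := by rw [abs_of_pos (by positivity)]; linarith
  refine ((summable_mul_pow_mul_natCast_pow huv
    (hasSum_Pba_div_factorial_mul_pow n a hv).summable 2).mul_left
    (Real.exp (-(a * x) / (1 + x)) / (1 + x) ^ n)).congr fun k => ?_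
  rw [Wgb_eq_mul hx]; ring

lemma nonneg_of_abs_le_mul_one_add_sq {g : ℝ → ℝ} {C : ℝ}
    (hC : ∀ t, 0 ≤ t → |g t| ≤ C * (1 + t ^ 2)) : 0 ≤ C := by
  simpa using (abs_nonneg _).trans (hC 0 le_rfl)

def QuadGrowth (g : ℝ → ℝ) : Prop :=
  ContinuousOn g (Ici 0) ∧ ∃ C, ∀ t, 0 ≤ t → |g t| ≤ C * (1 + t ^ 2)

namespace QuadGrowth

variable {g h : ℝ → ℝ}

lemma const (c : ℝ) : QuadGrowth fun _ => c :=
  ⟨continuousOn_const, |c|, fun t _ => le_mul_of_one_le_right (abs_nonneg c) (by nlinarith)⟩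

lemma sq_sub (x : ℝ) : QuadGrowth fun t => (t - x) ^ 2 :=
  ⟨by fun_prop, 2 + 2 * x ^ 2, fun t _ => by
    rw [abs_of_nonneg (sq_nonneg _)]; nlinarith [sq_nonneg (t + x), sq_nonneg (t * x)]⟩

lemma add (hg : QuadGrowth g) (hh : QuadGrowth h) : QuadGrowth fun t => g t + h t := by
  obtain ⟨hgc, C, hC⟩ := hg
  obtain ⟨hhc, D, hD⟩ := hh
  refine ⟨hgc.add hhc, C + D, fun t ht => ?_⟩
  linarith [abs_add_le (g t) (h t), hC t ht, hD t ht]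

lemma sub (hg : QuadGrowth g) (hh : QuadGrowth h) : QuadGrowth fun t => g t - h t := by
  obtain ⟨hgc, C, hC⟩ := hg
  obtain ⟨hhc, D, hD⟩ := hh
  refine ⟨hgc.sub hhc, C + D, fun t ht => ?_⟩
  linarith [abs_sub (g t) (h t), hC t ht, hD t ht]

lemma const_mul (hg : QuadGrowth g) (c : ℝ) : QuadGrowth fun t => c * g t := by
  obtain ⟨hgc, C, hC⟩ := hg
  refine ⟨continuousOn_const.mul hgc, |c| * C, fun t ht => ?_⟩
  rw [abs_mul, mul_assoc]
  exact mul_le_mul_of_nonneg_left (hC t ht) (abs_nonneg c)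

end QuadGrowth

def cellIntegral (n : ℕ) (g : ℝ → ℝ) (k : ℕ) : ℝ :=
  ∫ t in (k : ℝ) / (n + 1)..((k : ℝ) + 1) / (n + 1), g t

section cellIntegral

variable {n k : ℕ} {g h : ℝ → ℝ}

lemma cell_left_lt_right (n k : ℕ) : (k : ℝ) / (n + 1) < ((k : ℝ) + 1) / (n + 1) := by
  gcongr; linarith

lemma cell_left_le_right (n k : ℕ) : (k : ℝ) / (n + 1) ≤ ((k : ℝ) + 1) / (n + 1) :=
  (cell_left_lt_right n k).le

lemma uIcc_cell_subset_Ici (n k : ℕ) :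
    uIcc ((k : ℝ) / (n + 1)) (((k : ℝ) + 1) / (n + 1)) ⊆ Ici 0 := by
  rw [uIcc_of_le (cell_left_le_right n k)]
  exact fun t ht => le_trans (by positivity) ht.1

lemma intervalIntegrable_cell (hg : ContinuousOn g (Ici 0)) (n k : ℕ) :
    IntervalIntegrable g volume ((k : ℝ) / (n + 1)) (((k : ℝ) + 1) / (n + 1)) :=
  (hg.mono (uIcc_cell_subset_Ici n k)).intervalIntegrable

lemma cellIntegral_const (n : ℕ) (c : ℝ) (k : ℕ) : cellIntegral n (fun _ => c) k = c / (n + 1) := by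
  rw [cellIntegral, intervalIntegral.integral_const, smul_eq_mul]
  field_simp; ring

lemma cellIntegral_const_mul (c : ℝ) :
    cellIntegral n (fun t => c * g t) k = c * cellIntegral n g k :=
  intervalIntegral.integral_const_mul c _

lemma cellIntegral_add (hg : ContinuousOn g (Ici 0)) (hh : ContinuousOn h (Ici 0)) :
    cellIntegral n (fun t => g t + h t) k = cellIntegral n g k + cellIntegral n h k :=
  intervalIntegral.integral_add (intervalIntegrable_cell hg n k) (intervalIntegrable_cell hh n k)

lemma cellIntegral_sub (hg : ContinuousOn g (Ici 0)) (hh : ContinuousOn h (Ici 0)) :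
    cellIntegral n (fun t => g t - h t) k = cellIntegral n g k - cellIntegral n h k :=
  intervalIntegral.integral_sub (intervalIntegrable_cell hg n k) (intervalIntegrable_cell hh n k)

lemma abs_cellIntegral_le_of_abs_le (hh : ContinuousOn h (Ici 0))
    (hgh : ∀ t, 0 ≤ t → |g t| ≤ h t) : |cellIntegral n g k| ≤ cellIntegral n h k := by
  rw [← Real.norm_eq_abs]
  exact intervalIntegral.norm_integral_le_of_norm_le (cell_left_le_right n k)
    (Eventually.of_forall fun t ht => hgh t (le_trans (by positivity) ht.1.le))
    (intervalIntegrable_cell hh n k)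

lemma abs_cellIntegral_le {C : ℝ} (hC : ∀ t, 0 ≤ t → |g t| ≤ C * (1 + t ^ 2)) :
    |cellIntegral n g k| ≤ C * (1 + ((k : ℝ) + 1) ^ 2) := by
  have hN : (1 : ℝ) ≤ n + 1 := by simp
  have hC0 := nonneg_of_abs_le_mul_one_add_sq hC
  have hbound : ∀ t ∈ uIoc ((k : ℝ) / (n + 1)) (((k : ℝ) + 1) / (n + 1)),
      ‖g t‖ ≤ C * (1 + ((k : ℝ) + 1) ^ 2) := by
    intro t ht
    rw [uIoc_of_le (cell_left_le_right n k)] at ht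
    have ht0 : 0 ≤ t := le_trans (by positivity) ht.1.le
    have htk : t ≤ k + 1 := ht.2.trans (div_le_self (by positivity) hN)
    refine (hC t ht0).trans (mul_le_mul_of_nonneg_left ?_ hC0)
    gcongr
  have hlen : |((k : ℝ) + 1) / (n + 1) - k / (n + 1)| ≤ 1 := by
    rw [← sub_div, add_sub_cancel_left, abs_of_pos (by positivity)]
    exact div_le_one_of_le₀ hN (by positivity)
  rw [← Real.norm_eq_abs]
  refine (intervalIntegral.norm_integral_le_of_norm_le_const hbound).trans ?_
  exact mul_le_of_le_one_right (by positivity) hlen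

end cellIntegral

lemma Kgb_eq_tsum (a : ℝ) (n : ℕ) (g : ℝ → ℝ) (x : ℝ) :
    Kgb a n g x = (n + 1) * ∑' k, Wgb a n k x * cellIntegral n g k := rfl

section Kantorovich

variable {a x : ℝ} {n : ℕ} {g h : ℝ → ℝ}

lemma summable_Wgb_mul_cellIntegral (hx : 0 ≤ x) (hg : QuadGrowth g) :
    Summable fun k => Wgb a n k x * cellIntegral n g k := by
  obtain ⟨-, C, hC⟩ := hg
  have hC0 := nonneg_of_abs_le_mul_one_add_sq hC
  refine Summable.of_norm_bounded (((hasSum_Wgb a hx n).summable.abs.add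
    (summable_Wgb_mul_sq a hx n).abs).mul_left (3 * C)) fun k => ?_
  rw [Real.norm_eq_abs, abs_mul, abs_mul, abs_of_nonneg (sq_nonneg (k : ℝ))]
  have hJ := abs_cellIntegral_le (n := n) (k := k) hC
  calc |Wgb a n k x| * |cellIntegral n g k| ≤ |Wgb a n k x| * (C * (1 + ((k : ℝ) + 1) ^ 2)) :=
        mul_le_mul_of_nonneg_left hJ (abs_nonneg _)
    _ ≤ 3 * C * (|Wgb a n k x| + |Wgb a n k x| * (k : ℝ) ^ 2) := by
        nlinarith [mul_nonneg (mul_nonneg hC0 (abs_nonneg (Wgb a n k x)))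
          (add_nonneg (sq_nonneg ((k : ℝ) - 1)) (sq_nonneg (k : ℝ)))]

lemma hasSum_Kgb (hx : 0 ≤ x) (hg : QuadGrowth g) :
    HasSum (fun k => (n + 1) * (Wgb a n k x * cellIntegral n g k)) (Kgb a n g x) :=
  (summable_Wgb_mul_cellIntegral hx hg).hasSum.mul_left _

lemma Kgb_const (hx : 0 ≤ x) (c : ℝ) : Kgb a n (fun _ => c) x = c := by
  simp only [Kgb_eq_tsum, cellIntegral_const, tsum_mul_right, (hasSum_Wgb a hx n).tsum_eq]
  field_simp

lemma Kgb_const_mul (c : ℝ) : Kgb a n (fun t => c * g t) x = c * Kgb a n g x := by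
  simp only [Kgb_eq_tsum, cellIntegral_const_mul, mul_left_comm _ c, tsum_mul_left]

lemma Kgb_add (hx : 0 ≤ x) (hg : QuadGrowth g) (hh : QuadGrowth h) :
    Kgb a n (fun t => g t + h t) x = Kgb a n g x + Kgb a n h x :=
  (hasSum_Kgb hx (hg.add hh)).unique <| ((hasSum_Kgb hx hg).add (hasSum_Kgb hx hh)).congr_fun
    fun k => by rw [cellIntegral_add hg.1 hh.1]; ring

lemma Kgb_sub (hx : 0 ≤ x) (hg : QuadGrowth g) (hh : QuadGrowth h) :
    Kgb a n (fun t => g t - h t) x = Kgb a n g x - Kgb a n h x :=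
  (hasSum_Kgb hx (hg.sub hh)).unique <| ((hasSum_Kgb hx hg).sub (hasSum_Kgb hx hh)).congr_fun
    fun k => by rw [cellIntegral_sub hg.1 hh.1]; ring

lemma abs_Kgb_le (ha : 0 ≤ a) (hx : 0 ≤ x) (hg : QuadGrowth g) (hh : QuadGrowth h)
    (hgh : ∀ t, 0 ≤ t → |g t| ≤ h t) : |Kgb a n g x| ≤ Kgb a n h x := by
  have hterm : ∀ k, |(n + 1) * (Wgb a n k x * cellIntegral n g k)|
      ≤ (n + 1) * (Wgb a n k x * cellIntegral n h k) := fun k => by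
    rw [abs_mul, abs_mul, abs_of_pos (by positivity), abs_of_nonneg (Wgb_nonneg ha hx n k)]
    gcongr
    · exact Wgb_nonneg ha hx n k
    · exact abs_cellIntegral_le_of_abs_le hh.1 hgh
  exact abs_le.mpr ⟨hasSum_le (fun k => neg_le_of_abs_le (hterm k)) (hasSum_Kgb hx hh).neg
    (hasSum_Kgb hx hg), hasSum_le (fun k => le_of_abs_le (hterm k)) (hasSum_Kgb hx hg)
    (hasSum_Kgb hx hh)⟩

lemma integral_sq_sub_pos {lo hi : ℝ} (h : lo < hi) (x : ℝ) : 0 < ∫ t in lo..hi, (t - x) ^ 2 := by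
  rw [intervalIntegral.integral_comp_sub_right (fun t => t ^ 2) x, integral_pow,
    div_pos_iff_of_pos_right (by positivity), sub_pos]
  exact Odd.strictMono_pow (by decide) (by linarith)

lemma Kgb_sq_sub_pos (ha : 0 ≤ a) (hx : 0 ≤ x) :
    0 < Kgb a n (fun t => (t - x) ^ 2) x := by
  refine mul_pos (by positivity) ((summable_Wgb_mul_cellIntegral hx (.sq_sub x)).tsum_pos
    (fun k => mul_nonneg (Wgb_nonneg ha hx n k) ?_) 0
    (mul_pos (Wgb_zero_pos a hx n) (integral_sq_sub_pos (cell_left_lt_right n 0) x)))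
  exact intervalIntegral.integral_nonneg (cell_left_le_right n k) fun t _ => sq_nonneg _

end Kantorovich

section ModulusOfContinuity

variable {S : Set ℝ} {f : ℝ → ℝ} {δ ω s t : ℝ}

/-- Walk from `s` to `t` in `m` equal steps of length at most `δ`. -/
lemma abs_sub_le_natCast_mul_of_convex (hS : Convex ℝ S)
    (hf : ∀ s ∈ S, ∀ t ∈ S, |t - s| ≤ δ → |f t - f s| ≤ ω) (hs : s ∈ S) (ht : t ∈ S)
    {m : ℕ} (hm : |t - s| ≤ m * δ) : |f t - f s| ≤ m * ω := by
  rcases Nat.eq_zero_or_pos m with rfl | hm0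
  · obtain rfl : t = s := by simpa [sub_eq_zero] using hm
    simp
  have hm0' : (0 : ℝ) < m := by exact_mod_cast hm0
  set p : ℕ → ℝ := fun i => s + ((i : ℝ) / m) • (t - s)
  have hp : ∀ i ≤ m, p i ∈ S := fun i hi =>
    hS.add_smul_sub_mem hs ht ⟨by positivity, div_le_one_of_le₀ (by exact_mod_cast hi) hm0'.le⟩
  have hstep : ∀ i, p (i + 1) - p i = (t - s) / m := fun i => by
    simp only [p, smul_eq_mul]; push_cast; field_simp; ring
  have htel : f t - f s = ∑ i ∈ Finset.range m, (f (p (i + 1)) - f (p i)) := by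
    rw [Finset.sum_range_sub (fun i => f (p i))]
    simp only [p, div_self hm0'.ne', CharP.cast_eq_zero, zero_div, one_smul, zero_smul]
    ring_nf
  calc |f t - f s| ≤ ∑ i ∈ Finset.range m, |f (p (i + 1)) - f (p i)| := by
        rw [htel]; exact Finset.abs_sum_le_sum_abs _ _
    _ ≤ ∑ _i ∈ Finset.range m, ω := Finset.sum_le_sum fun i hi => by
        have him := Finset.mem_range.mp hi
        refine hf _ (hp i him.le) _ (hp (i + 1) him) ?_
        rw [hstep, abs_div, abs_of_pos hm0', div_le_iff₀ hm0']
        linarith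
    _ = m * ω := by simp

lemma abs_sub_le_one_add_sq_div_sq_mul_of_convex (hS : Convex ℝ S)
    (hf : ∀ s ∈ S, ∀ t ∈ S, |t - s| ≤ δ → |f t - f s| ≤ ω) (hδ : 0 < δ) (hs : s ∈ S) (ht : t ∈ S) :
    |f t - f s| ≤ (1 + (t - s) ^ 2 / δ ^ 2) * ω := by
  have hω : 0 ≤ ω := by simpa using hf s hs s hs (by simpa using hδ.le)
  by_cases hnear : |t - s| ≤ δ
  · exact (hf s hs t ht hnear).trans (le_mul_of_one_le_left hω (by simp; positivity))
  set r := |t - s| / δ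
  have hr : 1 < r := (one_lt_div hδ).mpr (not_le.mp hnear)
  have hsq : (t - s) ^ 2 / δ ^ 2 = r ^ 2 := by rw [div_pow, sq_abs]
  refine (abs_sub_le_natCast_mul_of_convex hS hf hs ht (m := ⌈r⌉₊) ?_).trans ?_
  · exact (div_le_iff₀ hδ).mp (Nat.le_ceil r)
  · rw [hsq]
    refine mul_le_mul_of_nonneg_right ?_ hω
    nlinarith [Nat.ceil_lt_add_one (zero_le_one.trans hr.le)]

lemma abs_sub_le_modContOn {c : ℝ} (hf : ContinuousOn f (Icc 0 c)) (hs : s ∈ Icc 0 c)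
    (ht : t ∈ Icc 0 c) (hst : |t - s| ≤ δ) : |f t - f s| ≤ modContOn f c δ := by
  obtain ⟨C, hC⟩ := isCompact_Icc.exists_bound_of_continuousOn hf
  refine le_csSup ⟨2 * C, ?_⟩ ⟨s, t, hs, ht, hst, rfl⟩
  rintro _ ⟨s', t', hs', ht', -, rfl⟩
  have hs'C := hC s' hs'
  have ht'C := hC t' ht'
  rw [Real.norm_eq_abs] at hs'C ht'C
  linarith [abs_sub (f t') (f s')]

end ModulusOfContinuity

lemma abs_sub_le_of_growth {f : ℝ → ℝ} {M b x t : ℝ}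
    (hgrow : ∀ y, 0 ≤ y → |f y| ≤ M * (1 + y ^ 2)) (hx : x ∈ Icc 0 b) (hxt : x + 1 ≤ t) :
    |f t - f x| ≤ 4 * M * (1 + b ^ 2) * (t - x) ^ 2 := by
  obtain ⟨hx0, hxb⟩ := hx
  have hM := nonneg_of_abs_le_mul_one_add_sq hgrow
  have hd : 1 ≤ t - x := by linarith
  have hkey : 2 + t ^ 2 + x ^ 2 ≤ 4 * (1 + b ^ 2) * (t - x) ^ 2 := by
    nlinarith [mul_le_mul hxb hd (by linarith) (by linarith), sq_nonneg (b - 1),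
      mul_le_mul hxb hxb hx0 (by linarith), one_le_pow₀ (n := 2) hd]
  have := mul_le_mul_of_nonneg_left hkey hM
  linarith [abs_sub (f t) (f x), hgrow t (by linarith), hgrow x hx0]

lemma abs_sub_le_sq_add_modContOn {f : ℝ → ℝ} {M b x t δ : ℝ}
    (hcont : ContinuousOn f (Ici 0)) (hgrow : ∀ y, 0 ≤ y → |f y| ≤ M * (1 + y ^ 2))
    (hx : x ∈ Icc 0 b) (hδ : 0 < δ) (ht : 0 ≤ t) :
    |f t - f x| ≤ 4 * M * (1 + b ^ 2) * (t - x) ^ 2 +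
      (1 + (t - x) ^ 2 / δ ^ 2) * modContOn f (b + 1) δ := by
  have hcont' : ContinuousOn f (Icc 0 (b + 1)) := hcont.mono Icc_subset_Ici_self
  have hx' : x ∈ Icc 0 (b + 1) := ⟨hx.1, by linarith [hx.2]⟩
  by_cases htb : t ≤ b + 1
  · have hM := nonneg_of_abs_le_mul_one_add_sq hgrow
    have := abs_sub_le_one_add_sq_div_sq_mul_of_convex (convex_Icc 0 (b + 1))
      (fun s hs t ht => abs_sub_le_modContOn hcont' hs ht) hδ hx' ⟨ht, htb⟩
    nlinarith [mul_nonneg (mul_nonneg hM (by positivity : (0 : ℝ) ≤ 1 + b ^ 2)) (sq_nonneg (t - x))]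
  · have hω : 0 ≤ modContOn f (b + 1) δ := by
      simpa using abs_sub_le_modContOn hcont' hx' hx' (by simpa using hδ.le)
    have := abs_sub_le_of_growth (t := t) hgrow hx (by linarith [hx.2])
    nlinarith [mul_nonneg (by positivity : (0 : ℝ) ≤ 1 + (t - x) ^ 2 / δ ^ 2) hω]

theorem statement3_general (a b Mf : ℝ) (ha : 0 ≤ a) (f : ℝ → ℝ)
    (hcont : ContinuousOn f (Set.Ici 0))
    (hgrow : ∀ x : ℝ, 0 ≤ x → |f x| ≤ Mf * (1 + x ^ 2)) :
    ∀ x ∈ Set.Icc (0 : ℝ) b, ∀ n : ℕ,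
      |Kgb a n f x - f x| ≤
        4 * Mf * (1 + b ^ 2) * Kgb a n (fun t => (t - x) ^ 2) x +
          2 * modContOn f (b + 1) (Real.sqrt (Kgb a n (fun t => (t - x) ^ 2) x)) := by
  intro x hx n
  set u := Kgb a n (fun t => (t - x) ^ 2) x
  have hu : 0 < u := Kgb_sq_sub_pos ha hx.1
  set δ := Real.sqrt u
  have hδ : 0 < δ := Real.sqrt_pos.mpr hu
  set ω := modContOn f (b + 1) δ
  set A := 4 * Mf * (1 + b ^ 2)
  have hf : QuadGrowth f := ⟨hcont, Mf, hgrow⟩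
  have hq : QuadGrowth fun t => (A + ω / δ ^ 2) * (t - x) ^ 2 := (QuadGrowth.sq_sub x).const_mul _
  calc |Kgb a n f x - f x| = |Kgb a n (fun t => f t - f x) x| := by
        rw [Kgb_sub hx.1 hf (.const _), Kgb_const hx.1]
    _ ≤ Kgb a n (fun t => (A + ω / δ ^ 2) * (t - x) ^ 2 + ω) x :=
        abs_Kgb_le ha hx.1 (hf.sub (.const _)) (hq.add (.const _)) fun t ht =>
          (abs_sub_le_sq_add_modContOn hcont hgrow hx hδ ht).trans_eq (by ring)
    _ = (A + ω / δ ^ 2) * u + ω := by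
        rw [Kgb_add hx.1 hq (.const _), Kgb_const_mul, Kgb_const hx.1]
    _ = A * u + 2 * ω := by
        rw [Real.sq_sqrt hu.le]; field_simp; ring

/-- weighted approximation on a compact interval. -/
theorem statement3 (a b Mf : ℝ) (ha : 0 ≤ a) (hb : 0 < b) (hM : 0 < Mf) (f : ℝ → ℝ)
    (hcont : ContinuousOn f (Set.Ici 0))
    (hgrow : ∀ x : ℝ, 0 ≤ x → |f x| ≤ Mf * (1 + x ^ 2)) :
    ∀ x ∈ Set.Icc (0 : ℝ) b, ∀ n : ℕ,
      |Kgb a n f x - f x| ≤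
        4 * Mf * (1 + b ^ 2) * Kgb a n (fun t => (t - x) ^ 2) x +
          2 * modContOn f (b + 1) (Real.sqrt (Kgb a n (fun t => (t - x) ^ 2) x)) :=
  statement3_general a b Mf ha f hcont hgrow
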